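/- For the Brusselator reaction subsystem T' = T²C, C' = −T²C with initial data T(t₀) = T₀ > 0, C(t₀) = C₀ ≥ 0 and k := T₀ + C₀, any solution satisfies 0 < T ≤ k and T is nondecreasing, since T' = T²(k − T) ≥ 0 while 0 < T ≤ k. -/

import Mathlib

/-!
Each equation is linear in one unknown with a continuous coefficient: `T' = (T C) T` and
`C' = (-T²) C`. By Grönwall's inequality a solution of such an equation that vanishes at one
point vanishes identically, so neither `T` nor `C` changes sign: `T > 0` and `C ≥ 0`.
Since `(T + C)' = 0` we get `T = k - C ≤ k`, and `T' = T² C ≥ 0` makes `T` nondecreasing.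
-/

open Set

section

variable {E : Type*} [NormedAddCommGroup E] [NormedSpace ℝ E] {f f' : ℝ → E} {g : ℝ → ℝ}
  {K a b z : ℝ}

theorem eqOn_zero_of_norm_deriv_le_mul_norm_self (hf : ∀ t ∈ Icc a b, HasDerivAt f (f' t) t)
    (bound : ∀ t ∈ Icc a b, ‖f' t‖ ≤ K * ‖f t‖) (hz : z ∈ Icc a b) (hfz : f z = 0) :
    EqOn f 0 (Icc a b) := by
  intro t ht
  rcases le_total z t with hzt | htz
  · refine eq_zero_of_abs_deriv_le_mul_abs_self_of_eq_zero_right (K := K)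
      (fun s hs => (hf s ⟨hz.1.trans hs.1, hs.2⟩).continuousAt.continuousWithinAt)
      (fun s hs => (hf s ⟨hz.1.trans hs.1, hs.2.le⟩).hasDerivWithinAt) hfz
      (fun s hs => bound s ⟨hz.1.trans hs.1, hs.2.le⟩) t ⟨hzt, ht.2⟩
  · -- Time reversal `s ↦ f (-s)` turns `[t, z]` into `[-z, -t]`, with `-z` as initial time.
    have hmem : ∀ s ∈ Icc (-z) (-a), -s ∈ Icc a b := fun s hs =>
      ⟨le_neg.mp hs.2, (neg_le.mp hs.1).trans hz.2⟩
    have hrev : ∀ s ∈ Icc (-z) (-a), HasDerivAt (fun s => f (-s)) ((-1 : ℝ) • f' (-s)) s :=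
      fun s hs => (hf (-s) (hmem s hs)).scomp s (hasDerivAt_neg s)
    simpa using eq_zero_of_abs_deriv_le_mul_abs_self_of_eq_zero_right (K := K)
      (fun s hs => (hrev s hs).continuousAt.continuousWithinAt)
      (fun s hs => (hrev s (Ico_subset_Icc_self hs)).hasDerivWithinAt) (by simpa using hfz)
      (fun s hs => by simpa using bound (-s) (hmem s (Ico_subset_Icc_self hs)))
      (-t) ⟨neg_le_neg htz, neg_le_neg ht.1⟩

theorem eqOn_zero_of_hasDerivAt_smul_self (hf : ∀ t ∈ Icc a b, HasDerivAt f (g t • f t) t)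
    (hg : ContinuousOn g (Icc a b)) (hz : z ∈ Icc a b) (hfz : f z = 0) :
    EqOn f 0 (Icc a b) := by
  obtain ⟨K, hK⟩ := isCompact_Icc.exists_bound_of_continuousOn hg
  refine eqOn_zero_of_norm_deriv_le_mul_norm_self hf (K := K) (fun t ht => ?_) hz hfz
  rw [norm_smul]
  exact mul_le_mul_of_nonneg_right (hK t ht) (norm_nonneg _)

end

section

variable {f g : ℝ → ℝ} {a b t₀ : ℝ}

theorem nonneg_of_hasDerivAt_mul_self (hf : ∀ t ∈ Icc a b, HasDerivAt f (g t * f t) t)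
    (hg : ContinuousOn g (Icc a b)) (ht₀ : t₀ ∈ Icc a b) (hf₀ : 0 ≤ f t₀) :
    ∀ t ∈ Icc a b, 0 ≤ f t := by
  intro t ht
  by_contra! hneg
  have hsub : uIcc t t₀ ⊆ Icc a b := uIcc_subset_Icc ht ht₀
  obtain ⟨z, hz, hfz⟩ := intermediate_value_uIcc
    (fun s hs => (hf s (hsub hs)).continuousAt.continuousWithinAt)
    (show (0 : ℝ) ∈ uIcc (f t) (f t₀) from mem_uIcc.mpr (Or.inl ⟨hneg.le, hf₀⟩))
  exact hneg.ne (eqOn_zero_of_hasDerivAt_smul_self hf hg (hsub hz) hfz ht)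

theorem pos_of_hasDerivAt_mul_self (hf : ∀ t ∈ Icc a b, HasDerivAt f (g t * f t) t)
    (hg : ContinuousOn g (Icc a b)) (ht₀ : t₀ ∈ Icc a b) (hf₀ : 0 < f t₀) :
    ∀ t ∈ Icc a b, 0 < f t := fun t ht =>
  (nonneg_of_hasDerivAt_mul_self hf hg ht₀ hf₀.le t ht).lt_of_ne fun hft =>
    hf₀.ne' (eqOn_zero_of_hasDerivAt_smul_self hf hg ht hft.symm ht₀)

end

/-- For the Brusselator reaction subsystem `T' = T²C`, `C' = −T²C` with
`T(t₀) = T₀ > 0`, `C(t₀) = C₀ ≥ 0` and `k := T₀ + C₀`, any solution satisfies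
`0 < T ≤ k` and `T` is nondecreasing on the interval. -/
theorem reaction_subsystem_monotone
    (a b t₀ T₀ C₀ : ℝ) (ht₀ : t₀ ∈ Set.Icc a b)
    (T C : ℝ → ℝ)
    (hT : ∀ t ∈ Set.Icc a b, HasDerivAt T ((T t)^2 * C t) t)
    (hC : ∀ t ∈ Set.Icc a b, HasDerivAt C (-((T t)^2 * C t)) t)
    (hT₀ : T t₀ = T₀) (hC₀ : C t₀ = C₀)
    (hT₀pos : 0 < T₀) (hC₀nonneg : 0 ≤ C₀)
    (k : ℝ) (hk : k = T₀ + C₀) :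
    (∀ t ∈ Set.Icc a b, 0 < T t ∧ T t ≤ k) ∧
    MonotoneOn T (Set.Icc a b) := by
  have hTc : ContinuousOn T (Icc a b) := fun t ht => (hT t ht).continuousAt.continuousWithinAt
  have hCc : ContinuousOn C (Icc a b) := fun t ht => (hC t ht).continuousAt.continuousWithinAt
  have hTpos : ∀ t ∈ Icc a b, 0 < T t :=
    pos_of_hasDerivAt_mul_self (g := fun t => T t * C t)
      (fun t ht => by convert hT t ht using 1; ring) (hTc.mul hCc) ht₀ (hT₀ ▸ hT₀pos)
  have hCnonneg : ∀ t ∈ Icc a b, 0 ≤ C t :=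
    nonneg_of_hasDerivAt_mul_self (g := fun t => -T t ^ 2)
      (fun t ht => by convert hC t ht using 1; ring) (hTc.pow 2).neg ht₀ (hC₀ ▸ hC₀nonneg)
  have hconst : ∀ t ∈ Icc a b, T t + C t = T a + C a :=
    constant_of_has_deriv_right_zero (hTc.add hCc) fun t ht => by
      simpa only [add_neg_cancel] using
        ((hT t (Ico_subset_Icc_self ht)).fun_add (hC t (Ico_subset_Icc_self ht))).hasDerivWithinAt
  have hsum : ∀ t ∈ Icc a b, T t + C t = k := fun t ht => by
    rw [hconst t ht, ← hconst t₀ ht₀, hT₀, hC₀, hk]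
  refine ⟨fun t ht => ⟨hTpos t ht, by linarith [hsum t ht, hCnonneg t ht]⟩, ?_⟩
  refine monotoneOn_of_hasDerivWithinAt_nonneg (convex_Icc a b) hTc
    (fun t ht => (hT t (interior_subset ht)).hasDerivWithinAt) fun t ht => ?_
  exact mul_nonneg (sq_nonneg _) (hCnonneg t (interior_subset ht))
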